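/- arXiv:1903.01463 — 3 statements merged into one kernel-verified Lean document; each statement's English description precedes it below -/
import Mathlib

section
/- Suppose the initial point satisfies ‖x_0^1 − x*‖ ≤ D and run SGDo with constant step size α = min(2/L, D/(G√(Kn))). Then the average x̂ = (1/(nK)) · Σ_{k=1}^{K} Σ_{i=0}^{n−1} x_i^k of all iterates satisfies E[F(x̂)] − F(x*) ≤ D²L/(4nK) + 3GD/√(nK). -/
open Finset MeasureTheory ProbabilityTheory RealInnerProductSpace

noncomputable section

abbrev Vec (d : ℕ) : Type := EuclideanSpace ℝ (Fin d)

/-- The objective `F(x) = (1/n) ∑ i, f(x; i)`. -/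
def avgF {d n : ℕ} (f : Fin n → Vec d → ℝ) : Vec d → ℝ :=
  fun x => (∑ i, f i x) / n

/-- SGDo iterates with constant step size `α`, flattened over epochs:
`σ j` is the permutation used during epoch `j + 1`, and at total step `t`
(the `t % n`-th step of epoch `t / n + 1`) we take a gradient step on the
component selected by the permutation of the current epoch. -/
def sgdoSeq {d n : ℕ} (hn : 0 < n) (f : Fin n → Vec d → ℝ) (α : ℝ)
    (x0 : Vec d) (σ : ℕ → Equiv.Perm (Fin n)) : ℕ → Vec d
  | 0 => x0
  | t + 1 =>
      sgdoSeq hn f α x0 σ t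
        - α • gradient (f (σ (t / n) ⟨t % n, Nat.mod_lt t hn⟩)) (sgdoSeq hn f α x0 σ t)

/-- `x_i^k`, for epoch `k ≥ 1` and within-epoch index `0 ≤ i ≤ n`. -/
def sgdoIter {d n : ℕ} (hn : 0 < n) (f : Fin n → Vec d → ℝ) (α : ℝ)
    (x0 : Vec d) (σ : ℕ → Equiv.Perm (Fin n)) (k i : ℕ) : Vec d :=
  sgdoSeq hn f α x0 σ ((k - 1) * n + i)

/-- Extend a `K`-tuple of permutations to `ℕ` (junk value beyond `K`). -/
def extendPerm {n K : ℕ} (ω : Fin K → Equiv.Perm (Fin n)) : ℕ → Equiv.Perm (Fin n) :=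
  fun j => if h : j < K then ω ⟨j, h⟩ else 1

/-- Expectation of `g` under the uniform distribution on a finite type. -/
def unifExp {Ω : Type*} [Fintype Ω] (g : Ω → ℝ) : ℝ :=
  (∑ ω, g ω) / (Fintype.card Ω)

instance permMeasurableSpace {n : ℕ} : MeasurableSpace (Equiv.Perm (Fin n)) := ⊤

/-- The uniform probability measure on a finite type. -/
def unifMeasure (Ω : Type*) [MeasurableSpace Ω] [Fintype Ω] [Nonempty Ω] : Measure Ω :=
  (PMF.uniformOfFintype Ω).toMeasure

/-- Wasserstein-1 distance between measures on `ℝ^d`, as an infimum over couplings. -/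
def W1dist {d : ℕ} (P Q : Measure (Vec d)) : ℝ :=
  sInf { c | ∃ μ : Measure (Vec d × Vec d), IsProbabilityMeasure μ ∧
    μ.map Prod.fst = P ∧ μ.map Prod.snd = Q ∧ c = ∫ p, ‖p.1 - p.2‖ ∂μ }

/-- Wasserstein-2 distance between measures on `ℝ^d`, as an infimum over couplings. -/
def W2dist {d : ℕ} (P Q : Measure (Vec d)) : ℝ :=
  sInf { c | ∃ μ : Measure (Vec d × Vec d), IsProbabilityMeasure μ ∧
    μ.map Prod.fst = P ∧ μ.map Prod.snd = Q ∧ c = Real.sqrt (∫ p, ‖p.1 - p.2‖ ^ 2 ∂μ) }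

section AuxAnalysis
open RealInnerProductSpace
variable {E : Type*} [NormedAddCommGroup E] [InnerProductSpace ℝ E] [CompleteSpace E]

lemma grad_inner (f : E → ℝ) (x v : E) : ⟪gradient f x, v⟫ = fderiv ℝ f x v := by
  simp [gradient, InnerProductSpace.toDual_symm_apply]

lemma norm_fderiv_eq_norm_gradient (f : E → ℝ) (x : E) : ‖fderiv ℝ f x‖ = ‖gradient f x‖ := by
  rw [gradient, LinearIsometryEquiv.norm_map]

/-- Gradient inequality for convex differentiable functions. -/
lemma convex_grad_ineq {f : E → ℝ} (hc : ConvexOn ℝ Set.univ f) (hd : Differentiable ℝ f)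
    (x y : E) : f x + ⟪gradient f x, y - x⟫ ≤ f y := by
  set g : ℝ → ℝ := fun t => f (x + t • (y - x)) with hg
  have hline : ∀ t : ℝ, HasDerivAt (fun s : ℝ => x + s • (y - x)) (y - x) t := by
    intro t
    simpa using ((hasDerivAt_id t).smul_const (y - x)).const_add x
  have hgd : ∀ t : ℝ, HasDerivAt g (fderiv ℝ f (x + t • (y - x)) (y - x)) t := by
    intro t
    exact ((hd _).hasFDerivAt.comp_hasDerivAt t (hline t))
  have hgc : ConvexOn ℝ Set.univ g := by
    have := hc.comp_affineMap (AffineMap.lineMap x y : ℝ →ᵃ[ℝ] E)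
    simp only [Set.preimage_univ] at this
    have hgeq : g = f ∘ ⇑(AffineMap.lineMap x y : ℝ →ᵃ[ℝ] E) := by
      funext t
      simp only [hg, Function.comp_apply, AffineMap.lineMap_apply_module]
      congr 1
      rw [smul_sub, sub_smul, one_smul]
      abel
    rw [hgeq]; exact this
  have h0 : (fderiv ℝ f (x + (0:ℝ) • (y - x)) (y - x)) ≤ slope g 0 1 :=
    hgc.le_slope_of_hasDerivAt (Set.mem_univ 0) (Set.mem_univ 1) zero_lt_one (hgd 0)
  have hs : slope g 0 1 = f y - f x := by
    simp [slope_def_field, hg]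
  rw [hs] at h0
  simp only [zero_smul, add_zero] at h0
  rw [grad_inner]
  linarith

/-- G-Lipschitz bound from bounded gradient. -/
lemma lip_of_grad_bound {f : E → ℝ} (hd : Differentiable ℝ f) {G : ℝ}
    (hG : ∀ x, ‖gradient f x‖ ≤ G) (x y : E) : ‖f y - f x‖ ≤ G * ‖y - x‖ := by
  have := Convex.norm_image_sub_le_of_norm_fderiv_le (f := f)
    (fun z _ => hd z) (fun z _ => by
      rw [norm_fderiv_eq_norm_gradient]; exact hG z) convex_univ (Set.mem_univ x) (Set.mem_univ y)
  simpa using this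

/-- Descent lemma: smooth upper bound. -/
lemma smooth_upper {f : E → ℝ} (hd : Differentiable ℝ f) {L : ℝ} (hL : 0 < L)
    (hLip : ∀ x y, ‖gradient f x - gradient f y‖ ≤ L * ‖x - y‖) (x y : E) :
    f y ≤ f x + ⟪gradient f x, y - x⟫ + L / 2 * ‖y - x‖ ^ 2 := by
  set d := y - x with hdd
  set g : ℝ → ℝ := fun t => f (x + t • d) with hg
  have hline : ∀ t : ℝ, HasDerivAt (fun s : ℝ => x + s • d) d t := by
    intro t; simpa using ((hasDerivAt_id t).smul_const d).const_add x
  have hgd : ∀ t : ℝ, HasDerivAt g (⟪gradient f (x + t • d), d⟫) t := by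
    intro t
    rw [grad_inner]
    exact ((hd _).hasFDerivAt.comp_hasDerivAt t (hline t))
  have hgradcont : Continuous (fun z : E => gradient f z) := by
    have : LipschitzWith (Real.toNNReal L) (fun z : E => gradient f z) := by
      apply LipschitzWith.of_dist_le_mul
      intro a b
      rw [dist_eq_norm, dist_eq_norm]
      calc ‖gradient f a - gradient f b‖ ≤ L * ‖a - b‖ := hLip a b
      _ = (Real.toNNReal L) * ‖a - b‖ := by rw [Real.coe_toNNReal _ hL.le]
    exact this.continuous
  have hcont : Continuous (fun t : ℝ => ⟪gradient f (x + t • d), d⟫) := by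
    apply Continuous.inner
    · exact hgradcont.comp (by continuity)
    · exact continuous_const
  have hftc : ∫ t in (0:ℝ)..1, ⟪gradient f (x + t • d), d⟫ = g 1 - g 0 := by
    exact intervalIntegral.integral_eq_sub_of_hasDerivAt (fun t _ => hgd t)
      (hcont.intervalIntegrable 0 1)
  have hbound : ∀ t ∈ Set.Icc (0:ℝ) 1,
      ⟪gradient f (x + t • d), d⟫ ≤ ⟪gradient f x, d⟫ + L * ‖d‖ ^ 2 * t := by
    intro t ht
    have h1 : ⟪gradient f (x + t • d) - gradient f x, d⟫ ≤ L * ‖d‖ ^ 2 * t := by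
      calc ⟪gradient f (x + t • d) - gradient f x, d⟫
          ≤ ‖gradient f (x + t • d) - gradient f x‖ * ‖d‖ := real_inner_le_norm _ _
        _ ≤ (L * ‖(x + t • d) - x‖) * ‖d‖ := by
            apply mul_le_mul_of_nonneg_right (hLip _ _) (norm_nonneg _)
        _ = L * ‖d‖ ^ 2 * t := by
            simp [norm_smul, abs_of_nonneg ht.1]
            ring
    have h2 : ⟪gradient f (x + t • d), d⟫
        = ⟪gradient f x, d⟫ + ⟪gradient f (x + t • d) - gradient f x, d⟫ := by
      rw [inner_sub_left]; ring
    linarith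
  have hint : ∫ t in (0:ℝ)..1, ⟪gradient f (x + t • d), d⟫
      ≤ ∫ t in (0:ℝ)..1, (⟪gradient f x, d⟫ + L * ‖d‖ ^ 2 * t) := by
    apply intervalIntegral.integral_mono_on zero_le_one
    · exact hcont.intervalIntegrable 0 1
    · exact (Continuous.intervalIntegrable (by fun_prop) 0 1)
    · exact hbound
  have hval : ∫ t in (0:ℝ)..1, (⟪gradient f x, d⟫ + L * ‖d‖ ^ 2 * t)
      = ⟪gradient f x, d⟫ + L / 2 * ‖d‖ ^ 2 := by
    rw [intervalIntegral.integral_add (intervalIntegrable_const)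
      (((by fun_prop : Continuous fun t : ℝ => L * ‖d‖ ^ 2 * t)).intervalIntegrable 0 1)]
    have h1 : ∫ t in (0:ℝ)..1, L * ‖d‖ ^ 2 * t = L * ‖d‖ ^ 2 * (((1:ℝ)^2 - (0:ℝ)^2)/2) := by
      rw [intervalIntegral.integral_const_mul, integral_id]
    rw [h1]
    simp
    ring
  have hgval : g 1 - g 0 = f y - f x := by simp [hg, hdd]
  rw [hftc, hgval, hval] at hint
  linarith

/-- Baillon–Haddad style lower bound. -/
lemma smooth_lower {f : E → ℝ} (hc : ConvexOn ℝ Set.univ f) (hd : Differentiable ℝ f)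
    {L : ℝ} (hL : 0 < L) (hLip : ∀ x y, ‖gradient f x - gradient f y‖ ≤ L * ‖x - y‖) (x y : E) :
    f x + ⟪gradient f x, y - x⟫ + 1 / (2 * L) * ‖gradient f y - gradient f x‖ ^ 2 ≤ f y := by
  set u := gradient f y - gradient f x with hu
  set z := y - (1 / L) • u with hz
  have h4 := smooth_upper hd hL hLip y z
  have h2 := convex_grad_ineq hc hd x z
  have hzy : z - y = -((1/L) • u) := by rw [hz]; abel
  have hnorm : ‖z - y‖ ^ 2 = (1 / L) ^ 2 * ‖u‖ ^ 2 := by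
    rw [hzy, norm_neg, norm_smul, Real.norm_eq_abs, abs_of_pos (by positivity : (0:ℝ) < 1/L)]
    ring
  have hinner1 : ⟪gradient f y, z - y⟫ = -(1/L) * ⟪gradient f y, u⟫ := by
    rw [hzy, inner_neg_right, real_inner_smul_right]; ring
  have hinner2 : ⟪gradient f x, z - x⟫ = ⟪gradient f x, y - x⟫ + ⟪gradient f x, z - y⟫ := by
    rw [← inner_add_right]; congr 1; abel
  have hinner3 : ⟪gradient f x, z - y⟫ = -(1/L) * ⟪gradient f x, u⟫ := by
    rw [hzy, inner_neg_right, real_inner_smul_right]; ring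
  have hinneru : ⟪gradient f y, u⟫ - ⟪gradient f x, u⟫ = ‖u‖ ^ 2 := by
    rw [← inner_sub_left, ← hu, real_inner_self_eq_norm_sq]
  have hL2 : L / 2 * ((1 / L) ^ 2 * ‖u‖ ^ 2) = 1 / (2 * L) * ‖u‖ ^ 2 := by
    field_simp
  have hAA : (1/L) * ⟪gradient f y, u⟫ - (1/L) * ⟪gradient f x, u⟫ = (1/L) * ‖u‖ ^ 2 := by
    rw [← mul_sub, hinneru]
  have h3 : (1/L) * ‖u‖ ^ 2 = 2 * (1 / (2 * L) * ‖u‖ ^ 2) := by field_simp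
  rw [hinner1, hnorm, hL2] at h4
  rw [hinner2, hinner3] at h2
  linarith [h4, h2, hAA, h3]

/-- Cocoercivity of the gradient. -/
lemma cocoercive {f : E → ℝ} (hc : ConvexOn ℝ Set.univ f) (hd : Differentiable ℝ f)
    {L : ℝ} (hL : 0 < L) (hLip : ∀ x y, ‖gradient f x - gradient f y‖ ≤ L * ‖x - y‖) (x y : E) :
    1 / L * ‖gradient f y - gradient f x‖ ^ 2 ≤ ⟪gradient f y - gradient f x, y - x⟫ := by
  have h1 := smooth_lower hc hd hL hLip x y
  have h2 := smooth_lower hc hd hL hLip y x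
  have e0 : ‖gradient f x - gradient f y‖ = ‖gradient f y - gradient f x‖ := norm_sub_rev _ _
  have e1 : ⟪gradient f y, x - y⟫ = - ⟪gradient f y, y - x⟫ := by
    rw [show x - y = -(y - x) by abel, inner_neg_right]
  have e2 : ⟪gradient f y - gradient f x, y - x⟫
      = ⟪gradient f y, y - x⟫ - ⟪gradient f x, y - x⟫ := by rw [inner_sub_left]
  rw [e0] at h2
  have h3 : 1/L * ‖gradient f y - gradient f x‖ ^ 2
      = 2 * (1 / (2 * L) * ‖gradient f y - gradient f x‖ ^ 2) := by field_simp
  linarith [h1, h2, e1, e2, h3]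

/-- A gradient step of a convex smooth function with step `α ≤ 2/L` is nonexpansive. -/
lemma grad_step_nonexpansive {f : E → ℝ} (hc : ConvexOn ℝ Set.univ f) (hd : Differentiable ℝ f)
    {L α : ℝ} (hL : 0 < L) (hLip : ∀ x y, ‖gradient f x - gradient f y‖ ≤ L * ‖x - y‖)
    (hα0 : 0 ≤ α) (hα2 : α ≤ 2 / L) (x y : E) :
    ‖(x - α • gradient f x) - (y - α • gradient f y)‖ ≤ ‖x - y‖ := by
  set u := gradient f x - gradient f y with hu
  have hco : 1 / L * ‖u‖ ^ 2 ≤ ⟪u, x - y⟫ := cocoercive hc hd hL hLip y x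
  have hrw : (x - α • gradient f x) - (y - α • gradient f y) = (x - y) - α • u := by
    rw [hu, smul_sub]; abel
  rw [hrw]
  have hexp : ‖(x - y) - α • u‖ ^ 2
      = ‖x - y‖ ^ 2 - 2 * (α * ⟪u, x - y⟫) + α ^ 2 * ‖u‖ ^ 2 := by
    rw [norm_sub_sq_real, real_inner_smul_right, norm_smul, Real.norm_eq_abs, mul_pow, sq_abs,
      real_inner_comm]
  have hmul : α ^ 2 * ‖u‖ ^ 2 ≤ (2 / L) * α * ‖u‖ ^ 2 := by
    have : α ^ 2 ≤ (2 / L) * α := by nlinarith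
    nlinarith [sq_nonneg ‖u‖]
  have hcoα := mul_le_mul_of_nonneg_left hco hα0
  have hsq : ‖(x - y) - α • u‖ ^ 2 ≤ ‖x - y‖ ^ 2 := by
    rw [hexp]
    have hring : (2 / L) * α * ‖u‖ ^ 2 = 2 * (α * (1 / L * ‖u‖ ^ 2)) := by ring
    linarith [hcoα, hmul]
  nlinarith [norm_nonneg ((x - y) - α • u), norm_nonneg (x - y), hsq]

end AuxAnalysis
section SGDAux

variable {d n : ℕ}

/-- The component index used at step `t`. -/
def compIdx (hn : 0 < n) (σ : ℕ → Equiv.Perm (Fin n)) (t : ℕ) : Fin n :=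
  σ (t / n) ⟨t % n, Nat.mod_lt t hn⟩

lemma sgdoSeq_succ (hn : 0 < n) (f : Fin n → Vec d → ℝ) (α : ℝ) (x0 : Vec d)
    (σ : ℕ → Equiv.Perm (Fin n)) (t : ℕ) :
    sgdoSeq hn f α x0 σ (t + 1) = sgdoSeq hn f α x0 σ t
      - α • gradient (f (compIdx hn σ t)) (sgdoSeq hn f α x0 σ t) := rfl

lemma epoch_div (hn : 0 < n) (e r : ℕ) (hr : r < n) : (e * n + r) / n = e := by
  rw [mul_comm, Nat.mul_add_div hn, Nat.div_eq_of_lt hr, add_zero]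

lemma epoch_mod (hn : 0 < n) (e r : ℕ) (hr : r < n) : (e * n + r) % n = r := by
  rw [mul_comm, Nat.mul_add_mod, Nat.mod_eq_of_lt hr]

lemma compIdx_epoch (hn : 0 < n) (σ : ℕ → Equiv.Perm (Fin n)) (e r : ℕ) (hr : r < n) :
    compIdx hn σ (e * n + r) = σ e ⟨r, hr⟩ := by
  unfold compIdx
  rw [epoch_div hn e r hr]
  exact congrArg (σ e) (Fin.ext (epoch_mod hn e r hr))

lemma sgdoSeq_congr (hn : 0 < n) (f : Fin n → Vec d → ℝ) (α : ℝ) (x0 : Vec d)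
    (σ σ' : ℕ → Equiv.Perm (Fin n)) :
    ∀ t, (∀ s, s < t → compIdx hn σ s = compIdx hn σ' s) →
      sgdoSeq hn f α x0 σ t = sgdoSeq hn f α x0 σ' t := by
  intro t
  induction t with
  | zero => intro _; rfl
  | succ t ih =>
      intro h
      rw [sgdoSeq_succ, sgdoSeq_succ, ih (fun s hs => h s (hs.trans (Nat.lt_succ_self t))),
        h t (Nat.lt_succ_self t)]

variable {G L α : ℝ} {f : Fin n → Vec d → ℝ}

/-- One step with equal components is nonexpansive. -/
lemma sgd_dist_succ_same (hn : 0 < n) (x0 : Vec d) (σ σ' : ℕ → Equiv.Perm (Fin n)) (t : ℕ)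
    (hL : 0 < L)
    (hdiff : ∀ i, Differentiable ℝ (f i))
    (hconv : ∀ i, ConvexOn ℝ Set.univ (f i))
    (hLsmooth : ∀ i x y, ‖gradient (f i) x - gradient (f i) y‖ ≤ L * ‖x - y‖)
    (hα0 : 0 ≤ α) (hα2 : α ≤ 2 / L)
    (hcomp : compIdx hn σ t = compIdx hn σ' t) :
    ‖sgdoSeq hn f α x0 σ (t+1) - sgdoSeq hn f α x0 σ' (t+1)‖
      ≤ ‖sgdoSeq hn f α x0 σ t - sgdoSeq hn f α x0 σ' t‖ := by
  rw [sgdoSeq_succ, sgdoSeq_succ, ← hcomp]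
  exact grad_step_nonexpansive (hconv _) (hdiff _) hL (hLsmooth _) hα0 hα2 _ _

/-- One step, arbitrary components. -/
lemma sgd_dist_succ_le (hn : 0 < n) (x0 : Vec d) (σ σ' : ℕ → Equiv.Perm (Fin n)) (t : ℕ)
    (hL : 0 < L)
    (hdiff : ∀ i, Differentiable ℝ (f i))
    (hconv : ∀ i, ConvexOn ℝ Set.univ (f i))
    (hGlip : ∀ i x, ‖gradient (f i) x‖ ≤ G)
    (hLsmooth : ∀ i x y, ‖gradient (f i) x - gradient (f i) y‖ ≤ L * ‖x - y‖)
    (hα0 : 0 ≤ α) (hα2 : α ≤ 2 / L) :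
    ‖sgdoSeq hn f α x0 σ (t+1) - sgdoSeq hn f α x0 σ' (t+1)‖
      ≤ ‖sgdoSeq hn f α x0 σ t - sgdoSeq hn f α x0 σ' t‖ + 2 * α * G := by
  set c := compIdx hn σ t
  set c' := compIdx hn σ' t
  set x := sgdoSeq hn f α x0 σ t
  set y := sgdoSeq hn f α x0 σ' t
  have hrw : sgdoSeq hn f α x0 σ (t+1) - sgdoSeq hn f α x0 σ' (t+1)
      = ((x - α • gradient (f c) x) - (y - α • gradient (f c) y))
        + α • (gradient (f c') y - gradient (f c) y) := by
    rw [sgdoSeq_succ, sgdoSeq_succ, smul_sub]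
    abel
  rw [hrw]
  have h1 := grad_step_nonexpansive (hconv c) (hdiff c) hL (hLsmooth c) hα0 hα2 x y
  have h2 : ‖α • (gradient (f c') y - gradient (f c) y)‖ ≤ 2 * α * G := by
    rw [norm_smul, Real.norm_eq_abs, abs_of_nonneg hα0]
    have hb : ‖gradient (f c') y - gradient (f c) y‖ ≤ 2 * G := by
      have := hGlip c y; have := hGlip c' y
      linarith [norm_sub_le (gradient (f c') y) (gradient (f c) y)]
    calc α * ‖gradient (f c') y - gradient (f c) y‖ ≤ α * (2 * G) :=
          mul_le_mul_of_nonneg_left hb hα0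
      _ = 2 * α * G := by ring
  calc ‖_ + _‖ ≤ ‖(x - α • gradient (f c) x) - (y - α • gradient (f c) y)‖
        + ‖α • (gradient (f c') y - gradient (f c) y)‖ := norm_add_le _ _
    _ ≤ ‖x - y‖ + 2 * α * G := add_le_add h1 h2

/-- Two trajectories whose permutations agree below epoch position `i` of epoch `e`
agree at time `e*n+i`. -/
lemma sgd_prefix_eq (hn : 0 < n) (f : Fin n → Vec d → ℝ) (α : ℝ) (x0 : Vec d)
    (σ σ' : ℕ → Equiv.Perm (Fin n)) (e i : ℕ) (hi : i ≤ n)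
    (hEp : ∀ m, m ≠ e → σ' m = σ m)
    (hPos : ∀ l : Fin n, (l : ℕ) < i → σ' e l = σ e l) :
    sgdoSeq hn f α x0 σ (e * n + i) = sgdoSeq hn f α x0 σ' (e * n + i) := by
  apply sgdoSeq_congr
  intro s hs
  rcases Nat.lt_or_ge s (e * n) with h | h
  · have hlt : s / n < e := by
      rw [Nat.div_lt_iff_lt_mul hn]
      omega
    unfold compIdx
    rw [hEp (s / n) (Nat.ne_of_lt hlt)]
  · set r := s - e * n with hr
    have hsr : s = e * n + r := by omega
    have hrn : r < n := by omega
    have hri : r < i := by omega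
    rw [hsr, compIdx_epoch hn σ e r hrn, compIdx_epoch hn σ' e r hrn,
      hPos ⟨r, hrn⟩ hri]

/-- Key coupling bound: after a swap of positions `j < i` in epoch `e`, the two
trajectories stay within `2αG` from step `e*n+j+1` through `e*n+i`. -/
lemma sgd_swap_dist (hn : 0 < n) (x0 : Vec d) (σ σ' : ℕ → Equiv.Perm (Fin n)) (e i j : ℕ)
    (hL : 0 < L)
    (hdiff : ∀ i, Differentiable ℝ (f i))
    (hconv : ∀ i, ConvexOn ℝ Set.univ (f i))
    (hGlip : ∀ i x, ‖gradient (f i) x‖ ≤ G)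
    (hLsmooth : ∀ i x y, ‖gradient (f i) x - gradient (f i) y‖ ≤ L * ‖x - y‖)
    (hα0 : 0 ≤ α) (hα2 : α ≤ 2 / L)
    (hji : j < i) (hi : i < n)
    (hEp : ∀ m, m ≠ e → σ' m = σ m)
    (hPos : ∀ l : Fin n, (l : ℕ) ≠ i → (l : ℕ) ≠ j → σ' e l = σ e l) :
    ∀ t, e * n + j < t → t ≤ e * n + i →
      ‖sgdoSeq hn f α x0 σ t - sgdoSeq hn f α x0 σ' t‖ ≤ 2 * α * G := by
  intro t
  induction t with
  | zero => omega
  | succ t ih =>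
    intro h1 h2
    rcases Nat.lt_or_ge (e * n + j) t with hgt | hle
    · -- middle of the stretch: equal components at step t
      have ht2 : t ≤ e * n + i := by omega
      have hcomp : compIdx hn σ t = compIdx hn σ' t := by
        set r := t - e * n with hrdef
        have hsr : t = e * n + r := by omega
        have hrn : r < n := by omega
        have hrij : r ≠ i ∧ r ≠ j := by omega
        rw [hsr, compIdx_epoch hn σ e r hrn, compIdx_epoch hn σ' e r hrn,
          hPos ⟨r, hrn⟩ hrij.1 hrij.2]
      exact le_trans
        (sgd_dist_succ_same hn x0 σ σ' t hL hdiff hconv hLsmooth hα0 hα2 hcomp)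
        (ih hgt ht2)
    · -- t = e*n+j : the swap step
      have ht : t = e * n + j := by omega
      have hpre : sgdoSeq hn f α x0 σ t = sgdoSeq hn f α x0 σ' t := by
        subst ht
        apply sgd_prefix_eq hn f α x0 σ σ' e j (by omega) hEp
        intro l hl
        exact hPos l (by omega) (by omega)
      have := sgd_dist_succ_le hn x0 σ σ' t hL hdiff hconv hGlip hLsmooth hα0 hα2
      rw [hpre, sub_self, norm_zero, zero_add] at this
      exact this

/-- The basic per-step optimization recursion, telescoped. -/
lemma sgd_recursion (hn : 0 < n) (x0 xstar : Vec d) (σ : ℕ → Equiv.Perm (Fin n))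
    (hα0 : 0 ≤ α)
    (hdiff : ∀ i, Differentiable ℝ (f i))
    (hconv : ∀ i, ConvexOn ℝ Set.univ (f i))
    (hGlip : ∀ i x, ‖gradient (f i) x‖ ≤ G) :
    ∀ T : ℕ, 2 * α * (∑ t ∈ Finset.range T,
        (f (compIdx hn σ t) (sgdoSeq hn f α x0 σ t) - f (compIdx hn σ t) xstar))
      ≤ ‖x0 - xstar‖ ^ 2 - ‖sgdoSeq hn f α x0 σ T - xstar‖ ^ 2 + T * (α ^ 2 * G ^ 2) := by
  intro T
  induction T with
  | zero => simp [sgdoSeq]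
  | succ T ih =>
    rw [Finset.sum_range_succ]
    set c := compIdx hn σ T with hc
    set x := sgdoSeq hn f α x0 σ T with hx
    have hstep : ‖sgdoSeq hn f α x0 σ (T+1) - xstar‖ ^ 2
        = ‖x - xstar‖ ^ 2 - 2 * (α * ⟪gradient (f c) x, x - xstar⟫)
          + α ^ 2 * ‖gradient (f c) x‖ ^ 2 := by
      rw [sgdoSeq_succ]
      have hre : x - α • gradient (f c) x - xstar = (x - xstar) - α • gradient (f c) x := by
        abel
      rw [← hc, ← hx, hre, norm_sub_sq_real, real_inner_smul_right, norm_smul,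
        Real.norm_eq_abs, mul_pow, sq_abs, real_inner_comm]
    have hconvi := convex_grad_ineq (hconv c) (hdiff c) x xstar
    have hinn : ⟪gradient (f c) x, xstar - x⟫ = - ⟪gradient (f c) x, x - xstar⟫ := by
      rw [show xstar - x = -(x - xstar) by abel, inner_neg_right]
    have hgb : ‖gradient (f c) x‖ ^ 2 ≤ G ^ 2 := by
      nlinarith [hGlip c x, norm_nonneg (gradient (f c) x)]
    have h1 : f c x - f c xstar ≤ ⟪gradient (f c) x, x - xstar⟫ := by
      rw [hinn] at hconvi; linarith
    have h2 := mul_le_mul_of_nonneg_left h1 (by linarith : (0:ℝ) ≤ 2 * α)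
    have h3 := mul_le_mul_of_nonneg_left hgb (sq_nonneg α)
    have hcast : ((T + 1 : ℕ) : ℝ) = (T : ℝ) + 1 := by push_cast; ring
    rw [hcast]
    nlinarith [ih, h2, h3, hstep]

/-- Flattening a range over `K*n` into epochs. -/
lemma sum_range_mul (K : ℕ) (g : ℕ → ℝ) :
    ∑ t ∈ Finset.range (K * n), g t
      = ∑ e ∈ Finset.range K, ∑ i : Fin n, g (e * n + (i : ℕ)) := by
  induction K with
  | zero => simp
  | succ K ih =>
    rw [Nat.succ_mul, Finset.sum_range_add, ih, Finset.sum_range_succ]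
    congr 1
    rw [Fin.sum_univ_eq_sum_range (fun i => g (K * n + i)) n]

end SGDAux
section SwapAux

variable {d n K : ℕ} {G L α : ℝ} {f : Fin n → Vec d → ℝ}

/-- Flattening a range over `K*n` into epochs. -/
lemma sum_range_mul' {M : Type*} [AddCommMonoid M] (n K : ℕ) (g : ℕ → M) :
    ∑ t ∈ Finset.range (K * n), g t
      = ∑ e ∈ Finset.range K, ∑ i : Fin n, g (e * n + (i : ℕ)) := by
  induction K with
  | zero => simp
  | succ K ih =>
    rw [Nat.succ_mul, Finset.sum_range_add, ih, Finset.sum_range_succ]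
    congr 1
    rw [Fin.sum_univ_eq_sum_range (fun i => g (K * n + i)) n]

lemma extendPerm_lt (ω : Fin K → Equiv.Perm (Fin n)) (e : ℕ) (he : e < K) :
    extendPerm ω e = ω ⟨e, he⟩ := dif_pos he

/-- The swap-coupling estimate: exchanging the components at positions `i` and `j`
of epoch `e` changes the component values at iterate `x_i` of epoch `e`, on average,
by at most `2αG²`. -/
lemma sgd_swap_sum (hn : 0 < n)
    (hL : 0 < L) (hG0 : 0 ≤ G)
    (hdiff : ∀ i, Differentiable ℝ (f i))
    (hconv : ∀ i, ConvexOn ℝ Set.univ (f i))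
    (hGlip : ∀ i x, ‖gradient (f i) x‖ ≤ G)
    (hLsmooth : ∀ i x y, ‖gradient (f i) x - gradient (f i) y‖ ≤ L * ‖x - y‖)
    (hα0 : 0 ≤ α) (hα2 : α ≤ 2 / L)
    (x0 : Vec d) (e : ℕ) (he : e < K) (i j : Fin n) :
    ∑ ω : Fin K → Equiv.Perm (Fin n),
      (f (ω ⟨e, he⟩ j) (sgdoSeq hn f α x0 (extendPerm ω) (e * n + (i : ℕ)))
        - f (ω ⟨e, he⟩ i) (sgdoSeq hn f α x0 (extendPerm ω) (e * n + (i : ℕ))))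
    ≤ (Fintype.card (Fin K → Equiv.Perm (Fin n)) : ℝ) * (2 * α * G ^ 2) := by
  classical
  have hRHS0 : (0:ℝ) ≤ (Fintype.card (Fin K → Equiv.Perm (Fin n)) : ℝ) * (2 * α * G ^ 2) := by
    positivity
  rcases eq_or_ne j i with rfl | hji
  · simpa using hRHS0
  set E : Fin K := ⟨e, he⟩ with hE
  set Φ : (Fin K → Equiv.Perm (Fin n)) → (Fin K → Equiv.Perm (Fin n)) :=
    fun ω => Function.update ω E (ω E * Equiv.swap i j) with hΦ
  have hΦE : ∀ ω, (Φ ω) E = ω E * Equiv.swap i j := by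
    intro ω; simp [hΦ]
  have hΦne : ∀ (ω) (m : Fin K), m ≠ E → (Φ ω) m = ω m := by
    intro ω m hm; simp [hΦ, Function.update_of_ne hm]
  have hinv : Function.Involutive Φ := by
    intro ω
    funext m
    rcases eq_or_ne m E with rfl | hm
    · rw [hΦE, hΦE, mul_assoc, Equiv.swap_mul_self, mul_one]
    · rw [hΦne _ m hm, hΦne _ m hm]
  set Xs : (Fin K → Equiv.Perm (Fin n)) → Vec d :=
    fun ω => sgdoSeq hn f α x0 (extendPerm ω) (e * n + (i : ℕ)) with hXs
  have hre : ∑ ω, f (ω E i) (Xs ω) = ∑ ω, f (ω E j) (Xs (Φ ω)) := by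
    rw [← Equiv.sum_comp (hinv.toPerm Φ) (fun ω => f (ω E i) (Xs ω))]
    apply Finset.sum_congr rfl
    intro ω _
    have h1 : (hinv.toPerm Φ) ω = Φ ω := rfl
    simp only [h1, hΦE, Equiv.Perm.mul_apply, Equiv.swap_apply_left]
  have hsplit : ∑ ω : Fin K → Equiv.Perm (Fin n), (f (ω E j) (Xs ω) - f (ω E i) (Xs ω))
      = ∑ ω : Fin K → Equiv.Perm (Fin n), (f (ω E j) (Xs ω) - f (ω E j) (Xs (Φ ω))) := by
    rw [Finset.sum_sub_distrib, Finset.sum_sub_distrib, hre]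
  rw [hsplit]
  -- agreement facts for the extended permutations
  have hEp : ∀ (ω) (m : ℕ), m ≠ e → extendPerm (Φ ω) m = extendPerm ω m := by
    intro ω m hm
    by_cases h : m < K
    · rw [extendPerm_lt _ m h, extendPerm_lt _ m h]
      exact hΦne ω ⟨m, h⟩ (by simp [hE, Fin.ext_iff, hm])
    · unfold extendPerm
      rw [dif_neg h, dif_neg h]
  have hPosNe : ∀ (ω) (l : Fin n), (l : ℕ) ≠ (i : ℕ) → (l : ℕ) ≠ (j : ℕ) →
      extendPerm (Φ ω) e l = extendPerm ω e l := by
    intro ω l hli hlj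
    rw [extendPerm_lt _ e he, extendPerm_lt _ e he, ← hE, hΦE, Equiv.Perm.mul_apply,
      Equiv.swap_apply_of_ne_of_ne (Fin.ne_of_val_ne hli) (Fin.ne_of_val_ne hlj)]
  rcases lt_trichotomy (j : ℕ) (i : ℕ) with hlt | heq | hgt
  · -- j < i : each term is at most 2αG²
    have hterm : ∀ ω : Fin K → Equiv.Perm (Fin n),
        f (ω E j) (Xs ω) - f (ω E j) (Xs (Φ ω)) ≤ 2 * α * G ^ 2 := by
      intro ω
      have hdist := sgd_swap_dist hn x0 (extendPerm ω) (extendPerm (Φ ω)) e (i : ℕ) (j : ℕ)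
        hL hdiff hconv hGlip hLsmooth hα0 hα2 hlt i.isLt (hEp ω) (hPosNe ω)
        (e * n + (i : ℕ)) (by omega) le_rfl
      have hlip := lip_of_grad_bound (hdiff (ω E j)) (hGlip (ω E j)) (Xs (Φ ω)) (Xs ω)
      have h1 : f (ω E j) (Xs ω) - f (ω E j) (Xs (Φ ω)) ≤ G * ‖Xs ω - Xs (Φ ω)‖ :=
        le_trans (le_trans (le_abs_self _) (le_of_eq (Real.norm_eq_abs _).symm)) hlip
      calc f (ω E j) (Xs ω) - f (ω E j) (Xs (Φ ω)) ≤ G * ‖Xs ω - Xs (Φ ω)‖ := h1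
        _ ≤ G * (2 * α * G) := mul_le_mul_of_nonneg_left hdist hG0
        _ = 2 * α * G ^ 2 := by ring
    calc ∑ ω : Fin K → Equiv.Perm (Fin n), (f (ω E j) (Xs ω) - f (ω E j) (Xs (Φ ω)))
        ≤ ∑ _ω : Fin K → Equiv.Perm (Fin n), (2 * α * G ^ 2) :=
          Finset.sum_le_sum (fun ω _ => hterm ω)
      _ = (Fintype.card (Fin K → Equiv.Perm (Fin n)) : ℝ) * (2 * α * G ^ 2) := by
          rw [Finset.sum_const, Finset.card_univ, nsmul_eq_mul]
  · exact absurd (Fin.ext heq) hji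
  · -- i < j : the swap does not affect the iterate
    have hXeq : ∀ ω, Xs (Φ ω) = Xs ω := by
      intro ω
      exact (sgd_prefix_eq hn f α x0 (extendPerm ω) (extendPerm (Φ ω)) e (i : ℕ) i.isLt.le
        (hEp ω) (fun l hl => hPosNe ω l (by omega) (by omega))).symm
    have : ∀ ω : Fin K → Equiv.Perm (Fin n),
        f (ω E j) (Xs ω) - f (ω E j) (Xs (Φ ω)) = 0 := by
      intro ω; rw [hXeq ω, sub_self]
    rw [Finset.sum_congr rfl (fun ω _ => this ω)]
    simpa using hRHS0

/-- Average bias bound at step `e*n+i`. -/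
lemma sgd_bias (hn : 0 < n)
    (hL : 0 < L) (hG0 : 0 ≤ G)
    (hdiff : ∀ i, Differentiable ℝ (f i))
    (hconv : ∀ i, ConvexOn ℝ Set.univ (f i))
    (hGlip : ∀ i x, ‖gradient (f i) x‖ ≤ G)
    (hLsmooth : ∀ i x y, ‖gradient (f i) x - gradient (f i) y‖ ≤ L * ‖x - y‖)
    (hα0 : 0 ≤ α) (hα2 : α ≤ 2 / L)
    (x0 : Vec d) (e : ℕ) (he : e < K) (i : Fin n) :
    ∑ ω : Fin K → Equiv.Perm (Fin n),
      ((∑ c, f c (sgdoSeq hn f α x0 (extendPerm ω) (e * n + (i : ℕ))))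
        - (n : ℝ) * f (compIdx hn (extendPerm ω) (e * n + (i : ℕ)))
            (sgdoSeq hn f α x0 (extendPerm ω) (e * n + (i : ℕ))))
    ≤ (Fintype.card (Fin K → Equiv.Perm (Fin n)) : ℝ) * ((n : ℝ) * (2 * α * G ^ 2)) := by
  classical
  have hcomp : ∀ ω : Fin K → Equiv.Perm (Fin n),
      compIdx hn (extendPerm ω) (e * n + (i : ℕ)) = ω ⟨e, he⟩ i := by
    intro ω
    rw [compIdx_epoch hn (extendPerm ω) e (i : ℕ) i.isLt, extendPerm_lt ω e he, Fin.eta]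
  have hext : ∀ ω : Fin K → Equiv.Perm (Fin n), ∀ z : Vec d,
      (∑ c, f c z) = ∑ jj : Fin n, f (ω ⟨e, he⟩ jj) z := by
    intro ω z
    exact (Equiv.sum_comp (ω ⟨e, he⟩) (fun c => f c z)).symm
  have hconst : ∀ ω : Fin K → Equiv.Perm (Fin n), ∀ z : Vec d,
      (n : ℝ) * f (ω ⟨e, he⟩ i) z = ∑ _jj : Fin n, f (ω ⟨e, he⟩ i) z := by
    intro ω z
    rw [Finset.sum_const, Finset.card_univ, nsmul_eq_mul, Fintype.card_fin]
  calc ∑ ω : Fin K → Equiv.Perm (Fin n),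
      ((∑ c, f c (sgdoSeq hn f α x0 (extendPerm ω) (e * n + (i : ℕ))))
        - (n : ℝ) * f (compIdx hn (extendPerm ω) (e * n + (i : ℕ)))
            (sgdoSeq hn f α x0 (extendPerm ω) (e * n + (i : ℕ))))
      = ∑ ω : Fin K → Equiv.Perm (Fin n), ∑ jj : Fin n,
          (f (ω ⟨e, he⟩ jj) (sgdoSeq hn f α x0 (extendPerm ω) (e * n + (i : ℕ)))
            - f (ω ⟨e, he⟩ i) (sgdoSeq hn f α x0 (extendPerm ω) (e * n + (i : ℕ)))) := by
        apply Finset.sum_congr rfl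
        intro ω _
        rw [hcomp ω, hext ω, hconst ω, ← Finset.sum_sub_distrib]
    _ = ∑ jj : Fin n, ∑ ω : Fin K → Equiv.Perm (Fin n),
          (f (ω ⟨e, he⟩ jj) (sgdoSeq hn f α x0 (extendPerm ω) (e * n + (i : ℕ)))
            - f (ω ⟨e, he⟩ i) (sgdoSeq hn f α x0 (extendPerm ω) (e * n + (i : ℕ)))) :=
        Finset.sum_comm
    _ ≤ ∑ _jj : Fin n, (Fintype.card (Fin K → Equiv.Perm (Fin n)) : ℝ) * (2 * α * G ^ 2) :=
        Finset.sum_le_sum (fun jj _ =>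
          sgd_swap_sum hn hL hG0 hdiff hconv hGlip hLsmooth hα0 hα2 x0 e he i jj)
    _ = (Fintype.card (Fin K → Equiv.Perm (Fin n)) : ℝ) * ((n : ℝ) * (2 * α * G ^ 2)) := by
        rw [Finset.sum_const, Finset.card_univ, nsmul_eq_mul, Fintype.card_fin]
        ring

end SwapAux
/-- Per-epoch sum of component values at a fixed point. -/
lemma sgd_xstar_sum {d n K : ℕ} (hn : 0 < n) (f : Fin n → Vec d → ℝ) (α : ℝ)
    (x0 xstar : Vec d) (ω : Fin K → Equiv.Perm (Fin n)) :
    ∑ e ∈ Finset.range K, ∑ i : Fin n,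
        f (compIdx hn (extendPerm ω) (e * n + (i : ℕ))) xstar
      = (K : ℝ) * ∑ c, f c xstar := by
  have h : ∀ e ∈ Finset.range K, ∑ i : Fin n,
      f (compIdx hn (extendPerm ω) (e * n + (i : ℕ))) xstar = ∑ c, f c xstar := by
    intro e hee
    have he := Finset.mem_range.mp hee
    have hc : ∀ i : Fin n, compIdx hn (extendPerm ω) (e * n + (i : ℕ)) = ω ⟨e, he⟩ i := by
      intro i
      rw [compIdx_epoch hn (extendPerm ω) e (i : ℕ) i.isLt, extendPerm_lt ω e he, Fin.eta]
    rw [Finset.sum_congr rfl (fun i _ => by rw [hc i])]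
    exact Equiv.sum_comp (ω ⟨e, he⟩) (fun c => f c xstar)
  rw [Finset.sum_congr rfl h, Finset.sum_const, Finset.card_range, nsmul_eq_mul]

lemma sum_Icc_one_aux {M : Type*} [AddCommMonoid M] (K : ℕ) (g : ℕ → M) :
    ∑ k ∈ Finset.Icc 1 K, g k = ∑ e ∈ Finset.range K, g (e + 1) := by
  induction K with
  | zero => simp
  | succ K ih => rw [Finset.sum_Icc_succ_top (by omega), ih, Finset.sum_range_succ]

/-- **Theorem 3 (no strong convexity).** With `‖x₀ − x*‖ ≤ D` and step size
`α = min(2/L, D/(G√(Kn)))`, the average of all SGDo iterates satisfies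
`E[F(x̂)] − F(x*) ≤ D²L/(4nK) + 3GD/√(nK)`. -/
theorem sgdo_no_strong_convexity
    (d n K : ℕ) (hn : 0 < n) (hK : 0 < K)
    (f : Fin n → Vec d → ℝ) (G L D α : ℝ) (x0 xstar : Vec d)
    (hL : 0 < L) (hG : 0 < G)
    (hα : α = min (2 / L) (D / (G * Real.sqrt ((K : ℝ) * n))))
    (hdiff : ∀ i, Differentiable ℝ (f i))
    (hconv : ∀ i, ConvexOn ℝ Set.univ (f i))
    (hGlip : ∀ i x, ‖gradient (f i) x‖ ≤ G)
    (hLsmooth : ∀ i x y, ‖gradient (f i) x - gradient (f i) y‖ ≤ L * ‖x - y‖)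
    (hmin : ∀ y, avgF f xstar ≤ avgF f y)
    (hD : ‖x0 - xstar‖ ≤ D) :
    unifExp (fun ω : Fin K → Equiv.Perm (Fin n) =>
        avgF f (((n : ℝ) * K)⁻¹ •
          ∑ k ∈ Finset.Icc 1 K, ∑ i : Fin n, sgdoIter hn f α x0 (extendPerm ω) k (i : ℕ)))
      - avgF f xstar
    ≤ D ^ 2 * L / (4 * n * K) + 3 * G * D / Real.sqrt ((n : ℝ) * K) := by
  classical
  have hG0 : (0:ℝ) ≤ G := hG.le
  have hD0 : (0:ℝ) ≤ D := le_trans (norm_nonneg _) hD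
  have hNpos : (0:ℝ) < (n:ℝ) := by exact_mod_cast hn
  have hKpos : (0:ℝ) < (K:ℝ) := by exact_mod_cast hK
  have hNK : ((n:ℝ) * (K:ℝ)) ≠ 0 := by positivity
  have hL2pos : (0:ℝ) < 2 / L := by positivity
  have hCpos : (0:ℝ) < (Fintype.card (Fin K → Equiv.Perm (Fin n)) : ℝ) := by
    exact_mod_cast (Fintype.card_pos : 0 < Fintype.card (Fin K → Equiv.Perm (Fin n)))
  have hsum_eq : ∀ ω : Fin K → Equiv.Perm (Fin n),
      (∑ k ∈ Finset.Icc 1 K, ∑ i : Fin n, sgdoIter hn f α x0 (extendPerm ω) k (i : ℕ))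
      = ∑ e ∈ Finset.range K, ∑ i : Fin n,
          sgdoSeq hn f α x0 (extendPerm ω) (e * n + (i : ℕ)) := by
    intro ω
    rw [sum_Icc_one_aux K (fun k => ∑ i : Fin n, sgdoIter hn f α x0 (extendPerm ω) k (i : ℕ))]
    refine Finset.sum_congr rfl (fun e _ => Finset.sum_congr rfl (fun i _ => ?_))
    unfold sgdoIter
    have h1 : e + 1 - 1 = e := by omega
    rw [h1]
  simp only [hsum_eq]
  rcases eq_or_lt_of_le hD0 with hDeq | hDpos
  · -- trivial case D = 0
    have hα0' : α = 0 := by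
      rw [hα, ← hDeq, zero_div]
      exact min_eq_right hL2pos.le
    have hx0 : x0 = xstar := by
      rw [← hDeq] at hD
      exact sub_eq_zero.mp (norm_le_zero_iff.mp hD)
    have hseq : ∀ σ t, sgdoSeq hn f α x0 σ t = xstar := by
      intro σ t
      induction t with
      | zero => exact hx0
      | succ t ih => rw [sgdoSeq_succ, ih, hα0', zero_smul, sub_zero]
    have havg : ∀ ω : Fin K → Equiv.Perm (Fin n),
        (((n:ℝ) * K)⁻¹ • ∑ e ∈ Finset.range K, ∑ i : Fin n,
          sgdoSeq hn f α x0 (extendPerm ω) (e * n + (i : ℕ))) = xstar := by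
      intro ω
      have h2 : ∑ e ∈ Finset.range K, ∑ i : Fin n,
          sgdoSeq hn f α x0 (extendPerm ω) (e * n + (i : ℕ)) = (K * n : ℕ) • xstar := by
        simp only [hseq, Finset.sum_const, Finset.card_univ, Fintype.card_fin,
          Finset.card_range, smul_smul]
      rw [h2, ← Nat.cast_smul_eq_nsmul ℝ, smul_smul,
        show (((K * n : ℕ)):ℝ) = (n:ℝ) * (K:ℝ) by push_cast; ring,
        inv_mul_cancel₀ hNK, one_smul]
    simp only [havg]
    unfold unifExp
    rw [Finset.sum_const, Finset.card_univ, nsmul_eq_mul,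
      mul_div_cancel_left₀ _ (ne_of_gt hCpos), sub_self, ← hDeq]
    positivity
  · -- main case D > 0
    set s : ℝ := Real.sqrt ((n:ℝ) * K) with hsdef
    have hs2' : Real.sqrt ((K:ℝ) * n) = s := by rw [hsdef, mul_comm]
    have hspos : 0 < s := Real.sqrt_pos.2 (by positivity)
    have hs2 : s ^ 2 = (n:ℝ) * K := Real.sq_sqrt (by positivity)
    have hβpos : 0 < D / (G * s) := by positivity
    have hα2L : α ≤ 2 / L := by rw [hα]; exact min_le_left _ _
    have hαβ : α ≤ D / (G * s) := by rw [hα, hs2']; exact min_le_right _ _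
    have hαpos : 0 < α := by rw [hα, hs2']; exact lt_min hL2pos hβpos
    have hα0 : 0 ≤ α := hαpos.le
    set SS : Vec d → ℝ := fun z => ∑ c, f c z with hSS
    set Xf : (Fin K → Equiv.Perm (Fin n)) → ℕ → Vec d :=
      fun ω t => sgdoSeq hn f α x0 (extendPerm ω) t with hXf
    set W : (Fin K → Equiv.Perm (Fin n)) → Vec d :=
      fun ω => ((n:ℝ) * (K:ℝ))⁻¹ • ∑ e ∈ Finset.range K, ∑ i : Fin n,
        Xf ω (e * n + (i : ℕ)) with hWdef
    set Cc : ℝ := (Fintype.card (Fin K → Equiv.Perm (Fin n)) : ℝ) with hCc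
    have havgF : ∀ z, avgF f z = SS z / (n:ℝ) := fun z => rfl
    -- Jensen step
    have jensen : ∀ ω, ((n:ℝ) * (K:ℝ)) * SS (W ω)
        ≤ ∑ e ∈ Finset.range K, ∑ i : Fin n, SS (Xf ω (e * n + (i : ℕ))) := by
      intro ω
      set w := W ω with hw
      set g := ∑ c, gradient (f c) w with hg
      have hXsum : ∑ e ∈ Finset.range K, ∑ i : Fin n, Xf ω (e * n + (i : ℕ))
          = ((n:ℝ) * (K:ℝ)) • w := (smul_inv_smul₀ hNK _).symm
      have hv : ∑ e ∈ Finset.range K, ∑ i : Fin n, (Xf ω (e * n + (i : ℕ)) - w) = 0 := by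
        have h1 : ∑ e ∈ Finset.range K, ∑ i : Fin n, (Xf ω (e * n + (i : ℕ)) - w)
            = (∑ e ∈ Finset.range K, ∑ i : Fin n, Xf ω (e * n + (i : ℕ)))
              - (K * n : ℕ) • w := by
          simp only [Finset.sum_sub_distrib, Finset.sum_const, Finset.card_univ,
            Fintype.card_fin, Finset.card_range, smul_smul]
        rw [h1, hXsum, ← Nat.cast_smul_eq_nsmul ℝ,
          show (((K * n : ℕ)):ℝ) = (n:ℝ) * (K:ℝ) by push_cast; ring, sub_self]
      have hinner0 : ∑ e ∈ Finset.range K, ∑ i : Fin n,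
          ⟪g, Xf ω (e * n + (i : ℕ)) - w⟫ = 0 := by
        simp only [← inner_sum]
        rw [hv, inner_zero_right]
      have hconst : ∑ e ∈ Finset.range K, ∑ _i : Fin n, SS w = ((n:ℝ) * (K:ℝ)) * SS w := by
        simp only [Finset.sum_const, Finset.card_univ, Fintype.card_fin,
          Finset.card_range, smul_smul, nsmul_eq_mul]
        push_cast
        ring
      have hper : ∀ e ∈ Finset.range K, ∀ i : Fin n,
          SS w + ⟪g, Xf ω (e * n + (i : ℕ)) - w⟫ ≤ SS (Xf ω (e * n + (i : ℕ))) := by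
        intro e _ i
        have h1 : ∀ c : Fin n, f c w + ⟪gradient (f c) w, Xf ω (e * n + (i : ℕ)) - w⟫
            ≤ f c (Xf ω (e * n + (i : ℕ))) :=
          fun c => convex_grad_ineq (hconv c) (hdiff c) w _
        have h2 := Finset.sum_le_sum (fun c (_ : c ∈ Finset.univ) => h1 c)
        rwa [Finset.sum_add_distrib, ← sum_inner] at h2
      calc ((n:ℝ) * (K:ℝ)) * SS w
          = ∑ e ∈ Finset.range K, ∑ i : Fin n,
              (SS w + ⟪g, Xf ω (e * n + (i : ℕ)) - w⟫) := by
            simp only [Finset.sum_add_distrib]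
            rw [hconst, hinner0, add_zero]
        _ ≤ ∑ e ∈ Finset.range K, ∑ i : Fin n, SS (Xf ω (e * n + (i : ℕ))) :=
            Finset.sum_le_sum (fun e he => Finset.sum_le_sum (fun i _ => hper e he i))
    -- bias step
    have bias_all : ∑ ω : Fin K → Equiv.Perm (Fin n), ∑ e ∈ Finset.range K, ∑ i : Fin n,
          SS (Xf ω (e * n + (i : ℕ)))
        ≤ (∑ ω : Fin K → Equiv.Perm (Fin n), ∑ e ∈ Finset.range K, ∑ i : Fin n,
            (n : ℝ) * f (compIdx hn (extendPerm ω) (e * n + (i : ℕ)))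
              (Xf ω (e * n + (i : ℕ))))
          + Cc * ((K:ℝ) * ((n:ℝ) * ((n:ℝ) * (2 * α * G ^ 2)))) := by
      have hsub : ∑ ω : Fin K → Equiv.Perm (Fin n), ∑ e ∈ Finset.range K, ∑ i : Fin n,
            (SS (Xf ω (e * n + (i : ℕ)))
              - (n : ℝ) * f (compIdx hn (extendPerm ω) (e * n + (i : ℕ)))
                  (Xf ω (e * n + (i : ℕ))))
          ≤ Cc * ((K:ℝ) * ((n:ℝ) * ((n:ℝ) * (2 * α * G ^ 2)))) := by
        rw [Finset.sum_comm]
        calc ∑ e ∈ Finset.range K, ∑ ω : Fin K → Equiv.Perm (Fin n), ∑ i : Fin n,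
              (SS (Xf ω (e * n + (i : ℕ)))
                - (n : ℝ) * f (compIdx hn (extendPerm ω) (e * n + (i : ℕ)))
                    (Xf ω (e * n + (i : ℕ))))
            ≤ ∑ e ∈ Finset.range K, Cc * ((n:ℝ) * ((n:ℝ) * (2 * α * G ^ 2))) := by
              refine Finset.sum_le_sum (fun e hee => ?_)
              have he := Finset.mem_range.mp hee
              rw [Finset.sum_comm]
              calc ∑ i : Fin n, ∑ ω : Fin K → Equiv.Perm (Fin n),
                  (SS (Xf ω (e * n + (i : ℕ)))
                    - (n : ℝ) * f (compIdx hn (extendPerm ω) (e * n + (i : ℕ)))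
                        (Xf ω (e * n + (i : ℕ))))
                  ≤ ∑ _i : Fin n, Cc * ((n:ℝ) * (2 * α * G ^ 2)) :=
                    Finset.sum_le_sum (fun i _ =>
                      sgd_bias hn hL hG0 hdiff hconv hGlip hLsmooth hα0 hα2L x0 e he i)
                _ = Cc * ((n:ℝ) * ((n:ℝ) * (2 * α * G ^ 2))) := by
                    simp only [Finset.sum_const, Finset.card_univ, Fintype.card_fin, nsmul_eq_mul]
                    ring
          _ = Cc * ((K:ℝ) * ((n:ℝ) * ((n:ℝ) * (2 * α * G ^ 2)))) := by
              simp only [Finset.sum_const, Finset.card_range, nsmul_eq_mul]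
              ring
      have hsplit : ∑ ω : Fin K → Equiv.Perm (Fin n), ∑ e ∈ Finset.range K, ∑ i : Fin n,
            (SS (Xf ω (e * n + (i : ℕ)))
              - (n : ℝ) * f (compIdx hn (extendPerm ω) (e * n + (i : ℕ)))
                  (Xf ω (e * n + (i : ℕ))))
          = (∑ ω : Fin K → Equiv.Perm (Fin n), ∑ e ∈ Finset.range K, ∑ i : Fin n,
              SS (Xf ω (e * n + (i : ℕ))))
            - ∑ ω : Fin K → Equiv.Perm (Fin n), ∑ e ∈ Finset.range K, ∑ i : Fin n,
              (n : ℝ) * f (compIdx hn (extendPerm ω) (e * n + (i : ℕ)))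
                (Xf ω (e * n + (i : ℕ))) := by
        simp only [Finset.sum_sub_distrib]
      linarith [hsub, hsplit.le, hsplit.symm.le]
    -- recursion step
    have recur : ∀ ω : Fin K → Equiv.Perm (Fin n),
        ∑ e ∈ Finset.range K, ∑ i : Fin n,
          f (compIdx hn (extendPerm ω) (e * n + (i : ℕ))) (Xf ω (e * n + (i : ℕ)))
        ≤ (K:ℝ) * SS xstar + (D ^ 2 + ((K:ℝ) * (n:ℝ)) * (α ^ 2 * G ^ 2)) / (2 * α) := by
      intro ω
      have hrec := sgd_recursion hn x0 xstar (extendPerm ω) hα0 hdiff hconv hGlip (K * n)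
      have hnorm : ‖x0 - xstar‖ ^ 2 ≤ D ^ 2 := pow_le_pow_left₀ (norm_nonneg _) hD 2
      have hrec2 : 2 * α * (∑ t ∈ Finset.range (K * n),
          (f (compIdx hn (extendPerm ω) t) (sgdoSeq hn f α x0 (extendPerm ω) t)
            - f (compIdx hn (extendPerm ω) t) xstar))
          ≤ D ^ 2 + ((K:ℝ) * (n:ℝ)) * (α ^ 2 * G ^ 2) := by
        have hK2 : ((K * n : ℕ) : ℝ) = (K:ℝ) * (n:ℝ) := by push_cast; ring
        rw [hK2] at hrec
        have hnn := sq_nonneg ‖sgdoSeq hn f α x0 (extendPerm ω) (K * n) - xstar‖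
        linarith [hrec, hnorm, hnn]
      rw [sum_range_mul' n K] at hrec2
      have hxs := sgd_xstar_sum hn f α x0 xstar ω
      have hsplit2 : ∑ e ∈ Finset.range K, ∑ i : Fin n,
            (f (compIdx hn (extendPerm ω) (e * n + (i : ℕ))) (Xf ω (e * n + (i : ℕ)))
              - f (compIdx hn (extendPerm ω) (e * n + (i : ℕ))) xstar)
          = (∑ e ∈ Finset.range K, ∑ i : Fin n,
              f (compIdx hn (extendPerm ω) (e * n + (i : ℕ))) (Xf ω (e * n + (i : ℕ))))
            - (K:ℝ) * SS xstar := by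
        simp only [Finset.sum_sub_distrib]
        rw [hxs]
      rw [hsplit2] at hrec2
      have h2α : (0:ℝ) < 2 * α := by linarith
      have h4 : (∑ e ∈ Finset.range K, ∑ i : Fin n,
            f (compIdx hn (extendPerm ω) (e * n + (i : ℕ))) (Xf ω (e * n + (i : ℕ))))
            - (K:ℝ) * SS xstar
          ≤ (D ^ 2 + ((K:ℝ) * (n:ℝ)) * (α ^ 2 * G ^ 2)) / (2 * α) := by
        rw [le_div_iff₀ h2α]
        linarith [hrec2]
      linarith [h4]
    -- summation of the pieces
    have sum_jensen : ∑ ω : Fin K → Equiv.Perm (Fin n), SS (W ω)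
        ≤ (∑ ω : Fin K → Equiv.Perm (Fin n), ∑ e ∈ Finset.range K, ∑ i : Fin n,
            SS (Xf ω (e * n + (i : ℕ)))) / ((n:ℝ) * (K:ℝ)) := by
      rw [Finset.sum_div]
      refine Finset.sum_le_sum (fun ω _ => ?_)
      rw [le_div_iff₀ (by positivity : (0:ℝ) < (n:ℝ) * (K:ℝ)), mul_comm]
      exact jensen ω
    have sum_recur : ∑ ω : Fin K → Equiv.Perm (Fin n), ∑ e ∈ Finset.range K, ∑ i : Fin n,
          (n : ℝ) * f (compIdx hn (extendPerm ω) (e * n + (i : ℕ))) (Xf ω (e * n + (i : ℕ)))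
        ≤ Cc * ((n:ℝ) * ((K:ℝ) * SS xstar
            + (D ^ 2 + ((K:ℝ) * (n:ℝ)) * (α ^ 2 * G ^ 2)) / (2 * α))) := by
      calc ∑ ω : Fin K → Equiv.Perm (Fin n), ∑ e ∈ Finset.range K, ∑ i : Fin n,
            (n : ℝ) * f (compIdx hn (extendPerm ω) (e * n + (i : ℕ)))
              (Xf ω (e * n + (i : ℕ)))
          = ∑ ω : Fin K → Equiv.Perm (Fin n), (n:ℝ) * ∑ e ∈ Finset.range K, ∑ i : Fin n,
              f (compIdx hn (extendPerm ω) (e * n + (i : ℕ))) (Xf ω (e * n + (i : ℕ))) := by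
            refine Finset.sum_congr rfl (fun ω _ => ?_)
            rw [Finset.mul_sum]
            exact Finset.sum_congr rfl (fun e _ => by rw [Finset.mul_sum])
        _ ≤ ∑ _ω : Fin K → Equiv.Perm (Fin n), (n:ℝ) * ((K:ℝ) * SS xstar
              + (D ^ 2 + ((K:ℝ) * (n:ℝ)) * (α ^ 2 * G ^ 2)) / (2 * α)) :=
            Finset.sum_le_sum (fun ω _ =>
              mul_le_mul_of_nonneg_left (recur ω) hNpos.le)
        _ = Cc * ((n:ℝ) * ((K:ℝ) * SS xstar
              + (D ^ 2 + ((K:ℝ) * (n:ℝ)) * (α ^ 2 * G ^ 2)) / (2 * α))) := by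
            rw [Finset.sum_const, Finset.card_univ, nsmul_eq_mul]
    set B2 : ℝ := Cc * ((n:ℝ) * ((K:ℝ) * SS xstar
        + (D ^ 2 + ((K:ℝ) * (n:ℝ)) * (α ^ 2 * G ^ 2)) / (2 * α)))
        + Cc * ((K:ℝ) * ((n:ℝ) * ((n:ℝ) * (2 * α * G ^ 2)))) with hB2
    have main_bound : ∑ ω : Fin K → Equiv.Perm (Fin n), SS (W ω)
        ≤ B2 / ((n:ℝ) * (K:ℝ)) := by
      refine le_trans sum_jensen ?_
      have hAB : ∑ ω : Fin K → Equiv.Perm (Fin n), ∑ e ∈ Finset.range K, ∑ i : Fin n,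
          SS (Xf ω (e * n + (i : ℕ))) ≤ B2 := le_trans bias_all (by rw [hB2]; linarith [sum_recur])
      gcongr
    -- arithmetic with the step size
    have hinv : 1 / α ≤ L / 2 + G * s / D := by
      rcases le_total (2 / L) (D / (G * Real.sqrt ((K : ℝ) * n))) with h | h
      · have hαeq : α = 2 / L := by rw [hα, min_eq_left h]
        rw [hαeq]
        have : 1 / (2 / L) = L / 2 := by field_simp
        rw [this]
        have : 0 ≤ G * s / D := by positivity
        linarith
      · have hαeq : α = D / (G * s) := by rw [hα, hs2', min_eq_right (by rw [hs2'] at h; exact h)]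
        rw [hαeq, one_div_div]
        have : (G * s) / D = G * s / D := by ring
        rw [this]
        have : (0:ℝ) ≤ L / 2 := by positivity
        linarith
    have harith : D ^ 2 / (2 * α * ((n:ℝ) * (K:ℝ))) + α * G ^ 2 / 2 + 2 * α * G ^ 2
        ≤ D ^ 2 * L / (4 * (n:ℝ) * (K:ℝ)) + 3 * G * D / s := by
      have e1 : D ^ 2 / (2 * α * ((n:ℝ) * (K:ℝ))) = D ^ 2 / (2 * α * s ^ 2) := by rw [hs2]
      have e2 : D ^ 2 * L / (4 * (n:ℝ) * (K:ℝ)) = D ^ 2 * L / (4 * s ^ 2) := by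
        rw [hs2]; ring
      rw [e1, e2]
      have h1 : D ^ 2 / (2 * α * s ^ 2) ≤ D ^ 2 * L / (4 * s ^ 2) + G * D / (2 * s) := by
        calc D ^ 2 / (2 * α * s ^ 2) = (D ^ 2 / (2 * s ^ 2)) * (1 / α) := by ring
          _ ≤ (D ^ 2 / (2 * s ^ 2)) * (L / 2 + G * s / D) :=
              mul_le_mul_of_nonneg_left hinv (by positivity)
          _ = D ^ 2 * L / (4 * s ^ 2) + G * D / (2 * s) := by
              field_simp
              ring
      have h3 : α * G ^ 2 ≤ G * D / s := by
        calc α * G ^ 2 ≤ (D / (G * s)) * G ^ 2 :=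
              mul_le_mul_of_nonneg_right hαβ (by positivity)
          _ = G * D / s := by field_simp
      have h3' : α * G ^ 2 / 2 + 2 * α * G ^ 2 ≤ 5 / 2 * (G * D / s) := by linarith
      have h5 : G * D / (2 * s) + 5 / 2 * (G * D / s) = 3 * G * D / s := by ring
      linarith [h1, h3', h5]
    -- final chain
    change unifExp (fun ω : Fin K → Equiv.Perm (Fin n) => avgF f (W ω)) - avgF f xstar ≤ _
    unfold unifExp
    simp only [havgF]
    rw [← Finset.sum_div, ← hCc]
    have hfinal_eq : (B2 / ((n:ℝ) * (K:ℝ))) / (n:ℝ) / Cc - SS xstar / (n:ℝ)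
        = D ^ 2 / (2 * α * ((n:ℝ) * (K:ℝ))) + α * G ^ 2 / 2 + 2 * α * G ^ 2 := by
      rw [hB2]
      field_simp
      ring
    calc (∑ ω : Fin K → Equiv.Perm (Fin n), SS (W ω)) / (n:ℝ) / Cc - SS xstar / (n:ℝ)
        ≤ (B2 / ((n:ℝ) * (K:ℝ))) / (n:ℝ) / Cc - SS xstar / (n:ℝ) := by
          gcongr
      _ = D ^ 2 / (2 * α * ((n:ℝ) * (K:ℝ))) + α * G ^ 2 / 2 + 2 * α * G ^ 2 := hfinal_eq
      _ ≤ D ^ 2 * L / (4 * (n:ℝ) * (K:ℝ)) + 3 * G * D / s := harith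
      _ = D ^ 2 * L / (4 * ↑n * ↑K) + 3 * G * D / s := by norm_num
end
end

section
/- For every epoch k and every 0 ≤ i ≤ n−1, |E[F(x_i^k)] − E[f(x_i^k; σ_k(i+1))]| ≤ (G/n) · Σ_{r=1}^{n} W1(D_{i,k}, D_{i,k}^{(r)}). -/
open Finset MeasureTheory ProbabilityTheory RealInnerProductSpace

noncomputable section

open Pointwise in
-- Lemma A : Lipschitz from gradient bound
lemma lip_of_grad {d : ℕ} {g : Vec d → ℝ} {G : ℝ} (hdiff : Differentiable ℝ g)
    (hG : ∀ x, ‖gradient g x‖ ≤ G) (x y : Vec d) : |g x - g y| ≤ G * ‖x - y‖ := by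
  have h : ∀ z ∈ (Set.univ : Set (Vec d)), ‖fderiv ℝ g z‖ ≤ G := by
    intro z _
    have : ‖fderiv ℝ g z‖ = ‖gradient g z‖ := by
      unfold gradient
      rw [LinearIsometryEquiv.norm_map]
    rw [this]; exact hG z
  have := (convex_univ (𝕜 := ℝ) (E := Vec d)).norm_image_sub_le_of_norm_fderiv_le
    (fun z _ => hdiff z) h (Set.mem_univ y) (Set.mem_univ x)
  simpa [Real.norm_eq_abs] using this

-- Lemma B : W1 bound for Lipschitz functions, finitely supported measures
open Pointwise in
lemma abs_integral_sub_le_W1 {d : ℕ} {g : Vec d → ℝ} {G : ℝ} (hG : 0 ≤ G)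
    (hlip : ∀ x y, |g x - g y| ≤ G * ‖x - y‖)
    (P Q : Measure (Vec d)) [IsProbabilityMeasure P] [IsProbabilityMeasure Q]
    (S T : Finset (Vec d)) (hS : S.Nonempty) (hT : T.Nonempty)
    (hP : P (↑S)ᶜ = 0) (hQ : Q (↑T)ᶜ = 0) :
    |∫ x, g x ∂P - ∫ x, g x ∂Q| ≤ G * W1dist P Q := by
  have hglw : LipschitzWith ⟨G, hG⟩ g := by
    apply LipschitzWith.of_dist_le_mul
    intro x y
    rw [Real.dist_eq, dist_eq_norm]; exact hlip x y
  have hgc : Continuous g := hglw.continuous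
  rw [W1dist]
  set W : Set ℝ := { c | ∃ μ : Measure (Vec d × Vec d), IsProbabilityMeasure μ ∧
    μ.map Prod.fst = P ∧ μ.map Prod.snd = Q ∧ c = ∫ p, ‖p.1 - p.2‖ ∂μ } with hW
  have hWne : W.Nonempty := by
    refine ⟨∫ p, ‖p.1 - p.2‖ ∂(P.prod Q), P.prod Q, inferInstance, ?_, ?_, rfl⟩
    · exact Measure.fst_prod
    · exact Measure.snd_prod
  have hsmul : G * sInf W = sInf (G • W) := by
    simpa [smul_eq_mul] using (Real.sInf_smul_of_nonneg hG W).symm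
  rw [hsmul]
  apply le_csInf (hWne.smul_set)
  rintro b ⟨c, ⟨μc, hprob, hfst, hsnd, hc⟩, rfl⟩
  -- a.e. support
  have hmS : MeasurableSet (↑S : Set (Vec d)) := S.measurableSet
  have hmT : MeasurableSet (↑T : Set (Vec d)) := T.measurableSet
  have hae1 : ∀ᵐ p ∂μc, p.1 ∈ (↑S : Set (Vec d)) := by
    rw [ae_iff]
    have : {p : Vec d × Vec d | ¬ p.1 ∈ (↑S : Set (Vec d))} = Prod.fst ⁻¹' (↑S)ᶜ := rfl
    rw [this, ← Measure.map_apply measurable_fst hmS.compl, hfst]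
    exact hP
  have hae2 : ∀ᵐ p ∂μc, p.2 ∈ (↑T : Set (Vec d)) := by
    rw [ae_iff]
    have : {p : Vec d × Vec d | ¬ p.2 ∈ (↑T : Set (Vec d))} = Prod.snd ⁻¹' (↑T)ᶜ := rfl
    rw [this, ← Measure.map_apply measurable_snd hmT.compl, hsnd]
    exact hQ
  -- integrability
  set C1 : ℝ := S.sup' hS (fun x => |g x|) with hC1
  set C2 : ℝ := T.sup' hT (fun x => |g x|) with hC2
  set C3 : ℝ := S.sup' hS (fun x => T.sup' hT (fun y => ‖x - y‖)) with hC3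
  have hint1 : Integrable (fun p : Vec d × Vec d => g p.1) μc := by
    refine Integrable.mono' (integrable_const C1)
      ((hgc.comp continuous_fst).aestronglyMeasurable) ?_
    filter_upwards [hae1] with p hp
    rw [hC1, Real.norm_eq_abs]
    exact Finset.le_sup' (fun x => |g x|) hp
  have hint2 : Integrable (fun p : Vec d × Vec d => g p.2) μc := by
    refine Integrable.mono' (integrable_const C2)
      ((hgc.comp continuous_snd).aestronglyMeasurable) ?_
    filter_upwards [hae2] with p hp
    rw [hC2, Real.norm_eq_abs]
    exact Finset.le_sup' (fun x => |g x|) hp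
  have hint3 : Integrable (fun p : Vec d × Vec d => ‖p.1 - p.2‖) μc := by
    refine Integrable.mono' (integrable_const C3)
      ((continuous_fst.sub continuous_snd).norm.aestronglyMeasurable) ?_
    filter_upwards [hae1, hae2] with p hp1 hp2
    have h1 : ‖p.1 - p.2‖ ≤ T.sup' hT (fun y => ‖p.1 - y‖) :=
      Finset.le_sup' (fun y => ‖p.1 - y‖) hp2
    have h2 : T.sup' hT (fun y => ‖p.1 - y‖) ≤ C3 :=
      Finset.le_sup' (fun x => T.sup' hT (fun y => ‖x - y‖)) hp1
    simpa using h1.trans h2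
  -- rewrite integrals
  have hip : ∫ x, g x ∂P = ∫ p, g p.1 ∂μc := by
    rw [← hfst, integral_map measurable_fst.aemeasurable]
    exact hgc.aestronglyMeasurable
  have hiq : ∫ x, g x ∂Q = ∫ p, g p.2 ∂μc := by
    rw [← hsnd, integral_map measurable_snd.aemeasurable]
    exact hgc.aestronglyMeasurable
  rw [hip, hiq, ← integral_sub hint1 hint2]
  calc |∫ p, (g p.1 - g p.2) ∂μc| ≤ ∫ p, |g p.1 - g p.2| ∂μc := by
        simpa [Real.norm_eq_abs] using
          norm_integral_le_integral_norm (fun p : Vec d × Vec d => g p.1 - g p.2) (μ := μc)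
    _ ≤ ∫ p, G * ‖p.1 - p.2‖ ∂μc := by
        refine integral_mono ((hint1.sub hint2).abs) (hint3.const_mul G) ?_
        intro p; exact hlip p.1 p.2
    _ = G * c := by rw [integral_const_mul, hc]

-- Equiv between fibers
def fiberEquiv {n K : ℕ} (j0 : Fin K) (i r r' : Fin n) :
    {ω : Fin K → Equiv.Perm (Fin n) // ω j0 i = r} ≃
    {ω : Fin K → Equiv.Perm (Fin n) // ω j0 i = r'} where
  toFun ω := ⟨Function.update ω.1 j0 (Equiv.swap r r' * ω.1 j0), by
    simp [Function.update_self, Equiv.Perm.mul_apply, ω.2, Equiv.swap_apply_left]⟩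
  invFun ω := ⟨Function.update ω.1 j0 (Equiv.swap r r' * ω.1 j0), by
    simp [Function.update_self, Equiv.Perm.mul_apply, ω.2, Equiv.swap_apply_right]⟩
  left_inv ω := by
    apply Subtype.ext
    simp only [Function.update_self, Function.update_idem, ← mul_assoc,
      Equiv.swap_mul_self, one_mul, Function.update_eq_self]
  right_inv ω := by
    apply Subtype.ext
    simp only [Function.update_self, Function.update_idem, ← mul_assoc,
      Equiv.swap_mul_self, one_mul, Function.update_eq_self]

lemma unifMeasure_event {n K : ℕ} (hn : 0 < n) (j0 : Fin K) (i r : Fin n) :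
    have : Nonempty (Fin n) := ⟨⟨0, hn⟩⟩
    unifMeasure (Fin K → Equiv.Perm (Fin n)) {ω | ω j0 i = r} = (n : ENNReal)⁻¹ := by
  intro _
  set μ := unifMeasure (Fin K → Equiv.Perm (Fin n)) with hμ
  set A : Fin n → Set (Fin K → Equiv.Perm (Fin n)) := fun r => {ω | ω j0 i = r} with hA
  have hmeas : ∀ r, MeasurableSet (A r) := fun r => .of_discrete
  have hkey : ∀ r r' : Fin n, μ (A r) = μ (A r') := by
    intro r r'
    rw [hμ, unifMeasure, PMF.toMeasure_uniformOfFintype_apply _ (hmeas r),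
      PMF.toMeasure_uniformOfFintype_apply _ (hmeas r')]
    congr 2
    simp only [Fintype.card_eq_nat_card]
    exact Nat.card_congr (fiberEquiv j0 i r r')
  have hunion : (⋃ r : Fin n, A r) = Set.univ := by
    ext ω; simp [hA]
  have hdisj : Pairwise (Function.onFun Disjoint A) := by
    intro a b hab
    simp only [Function.onFun, Set.disjoint_left]
    intro ω h1 h2
    have h1' : ω j0 i = a := h1
    have h2' : ω j0 i = b := h2
    exact hab (h1'.symm.trans h2')
  haveI : IsProbabilityMeasure μ := PMF.toMeasure.isProbabilityMeasure _
  have hsum : ∑ r' : Fin n, μ (A r') = 1 := by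
    rw [← tsum_fintype (L := SummationFilter.unconditional _), ← measure_iUnion hdisj hmeas, hunion]
    exact measure_univ
  have hconst : ∑ r' : Fin n, μ (A r') = (n : ENNReal) * μ (A r) := by
    rw [Finset.sum_congr rfl (fun r' _ => hkey r' r)]
    simp [Finset.sum_const, mul_comm]
  rw [hconst] at hsum
  rw [mul_comm] at hsum
  exact ENNReal.eq_inv_of_mul_eq_one_left hsum

lemma integral_unifMeasure {Ω : Type*} [Fintype Ω] [Nonempty Ω] [MeasurableSpace Ω]
    [MeasurableSingletonClass Ω] (g : Ω → ℝ) :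
    ∫ ω, g ω ∂(unifMeasure Ω) = unifExp g := by
  rw [unifMeasure, integral_fintype (Integrable.of_finite)]
  have h : ∀ ω : Ω, ((PMF.uniformOfFintype Ω).toMeasure {ω}).toReal
      = (Fintype.card Ω : ℝ)⁻¹ := by
    intro ω
    rw [PMF.toMeasure_apply_singleton _ _ (measurableSet_singleton ω),
      PMF.uniformOfFintype_apply]
    simp
  rw [Finset.sum_congr rfl (fun ω _ => by rw [Measure.real, h ω, smul_eq_mul])]
  rw [← Finset.mul_sum, unifExp, div_eq_inv_mul]

/-- **Lemma 1.** For every epoch `k` and `0 ≤ i ≤ n−1`,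
`|E[F(x_i^k)] − E[f(x_i^k; σ_k(i+1))]| ≤ (G/n) ∑_r W1(D_{i,k}, D_{i,k}^{(r)})`. -/
theorem wasserstein_connection
    (d n K : ℕ) (hn : 0 < n) (hK : 0 < K)
    (f : Fin n → Vec d → ℝ) (G L α : ℝ) (x0 : Vec d) (hα : 0 < α)
    (hdiff : ∀ i, Differentiable ℝ (f i))
    (hconv : ∀ i, ConvexOn ℝ Set.univ (f i))
    (hGlip : ∀ i x, ‖gradient (f i) x‖ ≤ G)
    (hLsmooth : ∀ i x y, ‖gradient (f i) x - gradient (f i) y‖ ≤ L * ‖x - y‖)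
    (k : ℕ) (hk1 : 1 ≤ k) (hkK : k ≤ K) (i : Fin n) :
    |unifExp (fun ω : Fin K → Equiv.Perm (Fin n) =>
        avgF f (sgdoIter hn f α x0 (extendPerm ω) k (i : ℕ)))
      - unifExp (fun ω : Fin K → Equiv.Perm (Fin n) =>
        f (extendPerm ω (k - 1) i) (sgdoIter hn f α x0 (extendPerm ω) k (i : ℕ)))|
    ≤ G / n * ∑ r : Fin n,
        W1dist
          (Measure.map (fun ω : Fin K → Equiv.Perm (Fin n) => sgdoIter hn f α x0 (extendPerm ω) k (i : ℕ))
            (unifMeasure (Fin K → Equiv.Perm (Fin n))))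
          (Measure.map (fun ω : Fin K → Equiv.Perm (Fin n) => sgdoIter hn f α x0 (extendPerm ω) k (i : ℕ))
            (ProbabilityTheory.cond (unifMeasure (Fin K → Equiv.Perm (Fin n)))
              {ω | extendPerm ω (k - 1) i = r})) := by
  classical
  have hkK' : k - 1 < K := by omega
  haveI : Nonempty (Fin n) := ⟨⟨0, hn⟩⟩
  have hext : ∀ ω : Fin K → Equiv.Perm (Fin n), extendPerm ω (k - 1) = ω ⟨k - 1, hkK'⟩ := by
    intro ω; rw [extendPerm]; rw [dif_pos hkK']
  simp only [hext]
  set j0 : Fin K := ⟨k - 1, hkK'⟩ with hj0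
  set X : (Fin K → Equiv.Perm (Fin n)) → Vec d :=
    fun ω => sgdoIter hn f α x0 (extendPerm ω) k (i : ℕ) with hX
  set μ := unifMeasure (Fin K → Equiv.Perm (Fin n)) with hμ
  haveI : IsProbabilityMeasure μ := PMF.toMeasure.isProbabilityMeasure _
  set A : Fin n → Set (Fin K → Equiv.Perm (Fin n)) := fun r => {ω | ω j0 i = r} with hA
  have hmeasA : ∀ r, MeasurableSet (A r) := fun _ => .of_discrete
  have hAμ : ∀ r, μ (A r) = (n : ENNReal)⁻¹ := fun r => unifMeasure_event hn j0 i r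
  set P : Measure (Vec d) := Measure.map X μ with hP
  set Q : Fin n → Measure (Vec d) := fun r => Measure.map X (ProbabilityTheory.cond μ (A r))
    with hQ
  have hXmeas : Measurable X := .of_discrete
  haveI hPprob : IsProbabilityMeasure P := Measure.isProbabilityMeasure_map hXmeas.aemeasurable
  have hAne0 : ∀ r, μ (A r) ≠ 0 := by
    intro r; rw [hAμ r]
    exact ENNReal.inv_ne_zero.mpr (ENNReal.natCast_ne_top n)
  haveI hQprob : ∀ r, IsProbabilityMeasure (Q r) := by
    intro r
    haveI := ProbabilityTheory.cond_isProbabilityMeasure (μ := μ) (hAne0 r)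
    exact Measure.isProbabilityMeasure_map hXmeas.aemeasurable
  have hGnonneg : 0 ≤ G := le_trans (norm_nonneg _) (hGlip i x0)
  have hn' : (0 : ℝ) < n := by exact_mod_cast hn
  set S : Finset (Vec d) := Finset.image X Finset.univ with hS
  have hSne : S.Nonempty := ⟨X Classical.ofNonempty, by simp [hS]⟩
  have hpre : X ⁻¹' (↑S)ᶜ = ∅ := by
    ext ω; simp [hS]
  have hPsupp : P (↑S)ᶜ = 0 := by
    rw [hP, Measure.map_apply hXmeas S.measurableSet.compl, hpre, measure_empty]
  have hQsupp : ∀ r, Q r (↑S)ᶜ = 0 := by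
    intro r
    rw [hQ, Measure.map_apply hXmeas S.measurableSet.compl, hpre, measure_empty]
  have hlip : ∀ r (x y : Vec d), |f r x - f r y| ≤ G * ‖x - y‖ :=
    fun r => lip_of_grad (hdiff r) (hGlip r)
  -- integral identities
  have hJ : ∀ r, ∫ x, f r x ∂P = ∫ ω, f r (X ω) ∂μ := by
    intro r
    rw [hP, integral_map hXmeas.aemeasurable ((hdiff r).continuous.aestronglyMeasurable)]
  have hQint : ∀ r, ∫ x, f r x ∂(Q r) = (n : ℝ) * ∫ ω in A r, f r (X ω) ∂μ := by
    intro r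
    rw [hQ, integral_map hXmeas.aemeasurable ((hdiff r).continuous.aestronglyMeasurable)]
    simp only [ProbabilityTheory.cond]
    rw [integral_smul_measure, hAμ r]
    simp [ENNReal.toReal_inv, smul_eq_mul]
  have hE1 : ∫ ω, avgF f (X ω) ∂μ = (∑ r, ∫ x, f r x ∂P) / n := by
    simp only [avgF]
    rw [integral_div, integral_finset_sum _ (fun r _ => Integrable.of_finite)]
    congr 1
    exact Finset.sum_congr rfl fun r _ => (hJ r).symm
  have hE2 : ∫ ω, f (ω j0 i) (X ω) ∂μ = ∑ r, (∫ x, f r x ∂(Q r)) / n := by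
    have hpt : (fun ω => f (ω j0 i) (X ω))
        = fun ω => ∑ r, (A r).indicator (fun ω' => f r (X ω')) ω := by
      funext ω
      rw [Finset.sum_congr rfl (fun r _ => Set.indicator_apply (A r) _ ω)]
      simp only [hA, Set.mem_setOf_eq]
      rw [Finset.sum_ite_eq]
      simp
    rw [hpt, integral_finset_sum _ (fun r _ => Integrable.of_finite)]
    refine Finset.sum_congr rfl fun r _ => ?_
    rw [integral_indicator (hmeasA r), hQint r]
    field_simp
  -- rewriting unifExp's as integrals
  rw [← integral_unifMeasure (fun ω => avgF f (X ω)),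
    ← integral_unifMeasure (fun ω => f (ω j0 i) (X ω))]
  rw [← hμ, hE1, hE2]
  have hbound : ∀ r, |∫ x, f r x ∂P - ∫ x, f r x ∂(Q r)| ≤ G * W1dist P (Q r) := by
    intro r
    haveI := hQprob r
    exact abs_integral_sub_le_W1 hGnonneg (hlip r) P (Q r) S S hSne hSne hPsupp (hQsupp r)
  calc |(∑ r, ∫ x, f r x ∂P) / ↑n - ∑ r, (∫ x, f r x ∂(Q r)) / ↑n|
      = |∑ r, ((∫ x, f r x ∂P) / ↑n - (∫ x, f r x ∂(Q r)) / ↑n)| := by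
        rw [Finset.sum_sub_distrib, Finset.sum_div]
    _ ≤ ∑ r, |(∫ x, f r x ∂P) / ↑n - (∫ x, f r x ∂(Q r)) / ↑n| :=
        Finset.abs_sum_le_sum_abs _ _
    _ = ∑ r, |(∫ x, f r x ∂P) - (∫ x, f r x ∂(Q r))| / ↑n := by
        refine Finset.sum_congr rfl fun r _ => ?_
        rw [div_sub_div_same, abs_div, abs_of_pos hn']
    _ ≤ ∑ r, (G * W1dist P (Q r)) / ↑n := by
        refine Finset.sum_le_sum fun r _ => ?_
        exact div_le_div_of_nonneg_right (hbound r) hn'.le |>.trans_eq rfl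
    _ = G / ↑n * ∑ r, W1dist P (Q r) := by
        rw [Finset.mul_sum]
        refine Finset.sum_congr rfl fun r _ => ?_
        rw [div_mul_eq_mul_div]
end
end

section
/- If g : ℝ^d → ℝ is convex and differentiable with L-Lipschitz gradient, then for all x, y ∈ ℝ^d, ‖∇g(x) − ∇g(y)‖² ≤ L·⟨∇g(x) − ∇g(y), x − y⟩. -/
open Finset MeasureTheory ProbabilityTheory RealInnerProductSpace

noncomputable section

/-!
An `L`-Lipschitz gradient makes `∇(L/2 ‖·‖² - g)` monotone, so `L/2 ‖·‖² - g` is convex and its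
first-order condition is the descent lemma `g y ≤ g x + ⟪∇g x, y - x⟫ + L/2 ‖y - x‖²`. Comparing
the descent lemma at `z = y - (∇g y - ∇g x) / L` with the first-order lower bound for the convex
`g` gives `‖∇g y - ∇g x‖² ≤ 2L (g y - g x - ⟪∇g x, y - x⟫)`; adding this inequality to the one
with `x` and `y` exchanged gives cocoercivity.
-/

section Cocoercivity

variable {E : Type*} [NormedAddCommGroup E] [InnerProductSpace ℝ E] [CompleteSpace E]
  {f : E → ℝ} {f' : E → E} {L : ℝ}

theorem HasGradientAt.hasDerivAt_comp_add_smul {g : E} {x v : E} {t : ℝ}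
    (hf : HasGradientAt f g (x + t • v)) :
    HasDerivAt (fun s : ℝ => f (x + s • v)) ⟪g, v⟫ t := by
  have hline : HasDerivAt (fun s : ℝ => x + s • v) v t :=
    ((hasDerivAt_id t).smul_const v).const_add x |>.congr_deriv (one_smul ℝ v)
  simpa [Function.comp_def] using hf.hasFDerivAt.comp_hasDerivAt t hline

theorem ConvexOn.add_inner_le_of_hasGradientAt (hf : ConvexOn ℝ Set.univ f) {g x : E}
    (hx : HasGradientAt f g x) (y : E) : f x + ⟪g, y - x⟫ ≤ f y := by
  have hline : ConvexOn ℝ Set.univ (fun t : ℝ => f (x + t • (y - x))) := by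
    simpa [Function.comp_def, AffineMap.lineMap_apply, add_comm] using
      hf.comp_affineMap (AffineMap.lineMap x y)
  have hderiv : HasDerivAt (fun t : ℝ => f (x + t • (y - x))) ⟪g, y - x⟫ 0 :=
    (by simpa using hx : HasGradientAt f g (x + (0 : ℝ) • (y - x))).hasDerivAt_comp_add_smul
  have := hline.le_slope_of_hasDerivAt (Set.mem_univ 0) (Set.mem_univ 1) one_pos hderiv
  simp only [slope_def_field, one_smul, add_sub_cancel, zero_smul, add_zero, sub_zero, div_one]
    at this
  linarith

theorem convexOn_univ_of_hasGradientAt_of_inner_nonneg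
    (hf : ∀ x, HasGradientAt f (f' x) x) (hmono : ∀ x y, 0 ≤ ⟪f' x - f' y, x - y⟫) :
    ConvexOn ℝ Set.univ f := by
  refine ⟨convex_univ, fun x _ y _ a b ha hb hab => ?_⟩
  set φ : ℝ → ℝ := fun t => f (x + t • (y - x))
  have hφ : ∀ t, HasDerivAt φ ⟪f' (x + t • (y - x)), y - x⟫ t := fun t =>
    (hf _).hasDerivAt_comp_add_smul
  have hφmono : Monotone (deriv φ) := by
    intro s t hst
    simp only [(hφ _).deriv]
    have key := hmono (x + t • (y - x)) (x + s • (y - x))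
    have : x + t • (y - x) - (x + s • (y - x)) = (t - s) • (y - x) := by module
    rw [this, real_inner_smul_right, inner_sub_left] at key
    rcases hst.eq_or_lt with rfl | hlt
    · rfl
    · linarith [nonneg_of_mul_nonneg_right key (sub_pos.2 hlt)]
  have hconv := hφmono.convexOn_univ_of_deriv (fun t => (hφ t).differentiableAt)
  have := hconv.2 (Set.mem_univ 0) (Set.mem_univ 1) ha hb hab
  obtain rfl : a = 1 - b := by linarith
  have e : (1 - b) • x + b • y = x + ((1 - b) • 0 + b • 1 : ℝ) • (y - x) := by
    simp only [smul_eq_mul, mul_one]; module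
  simpa [φ, e] using this

theorem HasGradientAt.half_mul_norm_sq_sub {g x : E} (hf : HasGradientAt f g x) (L : ℝ) :
    HasGradientAt (fun y => L / 2 * ‖y‖ ^ 2 - f y) (L • x - g) x := by
  rw [hasGradientAt_iff_hasFDerivAt] at *
  refine (((hasStrictFDerivAt_norm_sq x).hasFDerivAt.const_mul (L / 2)).sub hf).congr_fderiv ?_
  ext v
  simp only [sub_apply, smul_apply,
    coe_innerSL_apply, InnerProductSpace.toDual_apply_apply, inner_sub_left, real_inner_smul_left,
    smul_eq_mul, nsmul_eq_mul, Nat.cast_ofNat]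
  ring

theorem convexOn_univ_half_mul_norm_sq_sub (hf : ∀ x, HasGradientAt f (f' x) x)
    (hL : ∀ x y, ‖f' x - f' y‖ ≤ L * ‖x - y‖) :
    ConvexOn ℝ Set.univ (fun x => L / 2 * ‖x‖ ^ 2 - f x) := by
  refine convexOn_univ_of_hasGradientAt_of_inner_nonneg
    (fun x => (hf x).half_mul_norm_sq_sub L) fun x y => ?_
  have hcs : ⟪f' x - f' y, x - y⟫ ≤ L * ‖x - y‖ ^ 2 := calc
    _ ≤ ‖f' x - f' y‖ * ‖x - y‖ := real_inner_le_norm _ _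
    _ ≤ L * ‖x - y‖ * ‖x - y‖ := by gcongr; exact hL x y
    _ = L * ‖x - y‖ ^ 2 := by ring
  have : L • x - f' x - (L • y - f' y) = L • (x - y) - (f' x - f' y) := by module
  rw [this, inner_sub_left, real_inner_smul_left, real_inner_self_eq_norm_sq]
  linarith

theorem le_add_inner_add_half_mul_norm_sq (hf : ∀ x, HasGradientAt f (f' x) x)
    (hL : ∀ x y, ‖f' x - f' y‖ ≤ L * ‖x - y‖) (x y : E) :
    f y ≤ f x + ⟪f' x, y - x⟫ + L / 2 * ‖y - x‖ ^ 2 := by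
  have := (convexOn_univ_half_mul_norm_sq_sub hf hL).add_inner_le_of_hasGradientAt
    ((hf x).half_mul_norm_sq_sub L) y
  have hsq : ‖y‖ ^ 2 = ‖x‖ ^ 2 + 2 * ⟪x, y - x⟫ + ‖y - x‖ ^ 2 := by
    simpa using norm_add_sq_real x (y - x)
  rw [inner_sub_left, real_inner_smul_left, hsq] at this
  linarith

theorem ConvexOn.sq_norm_sub_le_of_lipschitz (hconv : ConvexOn ℝ Set.univ f)
    (hf : ∀ x, HasGradientAt f (f' x) x) (hL : ∀ x y, ‖f' x - f' y‖ ≤ L * ‖x - y‖)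
    (hLpos : 0 < L) (x y : E) : ‖f' y - f' x‖ ^ 2 ≤ 2 * L * (f y - f x - ⟪f' x, y - x⟫) := by
  set w := f' y - f' x
  set z := y - L⁻¹ • w
  have hlower := hconv.add_inner_le_of_hasGradientAt (hf x) z
  have hupper := le_add_inner_add_half_mul_norm_sq hf hL y z
  have hzx : z - x = (y - x) - L⁻¹ • w := by simp only [z]; abel
  have hzy : z - y = -(L⁻¹ • w) := by simp only [z]; abel
  have hw : ⟪f' y, w⟫ - ⟪f' x, w⟫ = ‖w‖ ^ 2 := by
    rw [← inner_sub_left, real_inner_self_eq_norm_sq]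
  rw [hzx, inner_sub_right, real_inner_smul_right] at hlower
  rw [hzy, inner_neg_right, real_inner_smul_right, norm_neg, norm_smul, Real.norm_eq_abs,
    abs_of_pos (inv_pos.2 hLpos)] at hupper
  have key : L⁻¹ * ‖w‖ ^ 2 / 2 ≤ f y - f x - ⟪f' x, y - x⟫ := by
    have hquad : L / 2 * (L⁻¹ * ‖w‖) ^ 2 = L⁻¹ * ‖w‖ ^ 2 / 2 := by field_simp
    have hlin : L⁻¹ * ⟪f' y, w⟫ - L⁻¹ * ⟪f' x, w⟫ = L⁻¹ * ‖w‖ ^ 2 := by rw [← hw]; ring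
    linarith
  calc ‖w‖ ^ 2 = 2 * L * (L⁻¹ * ‖w‖ ^ 2 / 2) := by field_simp
    _ ≤ _ := by gcongr

end Cocoercivity

/-- **Lemma 3 (cocoercivity).** If `g` is convex, differentiable with
`L`-Lipschitz gradient, then `‖∇g(x) − ∇g(y)‖² ≤ L⟨∇g(x) − ∇g(y), x − y⟩`. -/
theorem smooth_convex_cocoercive
    (d : ℕ) (g : Vec d → ℝ) (L : ℝ)
    (hdiff : Differentiable ℝ g)
    (hconv : ConvexOn ℝ Set.univ g)
    (hL : ∀ x y, ‖gradient g x - gradient g y‖ ≤ L * ‖x - y‖) :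
    ∀ x y : Vec d,
      ‖gradient g x - gradient g y‖ ^ 2
        ≤ L * ⟪gradient g x - gradient g y, x - y⟫ := by
  intro x y
  rcases le_or_gt L 0 with hL0 | hLpos
  · have : ‖gradient g x - gradient g y‖ ≤ 0 :=
      (hL x y).trans (mul_nonpos_of_nonpos_of_nonneg hL0 (norm_nonneg _))
    simp [norm_le_zero_iff.1 this]
  have hgrad : ∀ x, HasGradientAt g (gradient g x) x := fun x => (hdiff x).hasGradientAt
  have hxy := hconv.sq_norm_sub_le_of_lipschitz hgrad hL hLpos x y
  have hyx := hconv.sq_norm_sub_le_of_lipschitz hgrad hL hLpos y x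
  have hinner : ⟪gradient g x, y - x⟫ + ⟪gradient g y, x - y⟫
      = -⟪gradient g x - gradient g y, x - y⟫ := by
    rw [← neg_sub x y, inner_neg_right, inner_sub_left]; ring
  rw [norm_sub_rev] at hxy
  linear_combination (hxy + hyx) / 2 - L * hinner
end
end
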